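/- For a finite set of tile types T, there exists a T-tiling of some h × 1 rectangle (for some h ≥ 1) if and only if there exists one with h ≤ |T| + 1. Consequently, the problem 'does there exist h and a T-tiling of the h × 1 rectangle' is decidable. -/
import Mathlib


structure Tile (C : Type) where
  left : C
  up : C
  right : C
  down : C
deriving DecidableEq

/-- A `T`-tiling of the `H × W` rectangle: all tiles are from `T`, the borders are
white on all four sides, and adjacent tiles match horizontally and vertically. -/
def IsTiling {C : Type} (white : C) (T : Finset (Tile C)) (H W : ℕ)
    (τ : Fin H → Fin W → Tile C) : Prop :=
  (∀ i j, τ i j ∈ T) ∧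
  (∀ i j, j.val = 0 → (τ i j).left = white) ∧
  (∀ i j, j.val = W - 1 → (τ i j).right = white) ∧
  (∀ i j, i.val = 0 → (τ i j).up = white) ∧
  (∀ i j, i.val = H - 1 → (τ i j).down = white) ∧
  (∀ (i : Fin H) (j : Fin W) (h : j.val + 1 < W),
      (τ i j).right = (τ i ⟨j.val + 1, h⟩).left) ∧
  (∀ (i : Fin H) (j : Fin W) (h : i.val + 1 < H),
      (τ i j).down = (τ ⟨i.val + 1, h⟩ j).up)

/-- A `T`-tiling of the `h × 1` rectangle (a single column): left/right colors of all
tiles are white, top of the first and bottom of the last tile are white, and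
consecutive tiles match vertically. -/
def IsColTiling {C : Type} (white : C) (T : Finset (Tile C)) (h : ℕ)
    (τ : Fin h → Tile C) : Prop :=
  (∀ i, τ i ∈ T) ∧
  (∀ i : Fin h, i.val = 0 → (τ i).up = white) ∧
  (∀ i : Fin h, i.val = h - 1 → (τ i).down = white) ∧
  (∀ i, (τ i).left = white) ∧
  (∀ i, (τ i).right = white) ∧
  (∀ (i : Fin h) (hlt : i.val + 1 < h), (τ i).down = (τ ⟨i.val + 1, hlt⟩).up)

/-- A deterministic set of tile types: there is a partition of the colors
`C = Col ⊔ Colᶜ` with `white ∈ Col` such that tops and bottoms of tiles lie on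
opposite sides, and a tile is determined by its (left,up) colors when its left
color is in `Col`, and by its (right,up) colors when its right color is in `Colᶜ`. -/
def Deterministic {C : Type} (white : C) (T : Finset (Tile C)) : Prop :=
  ∃ Col : Set C, white ∈ Col ∧
    (∀ t ∈ T, (t.up ∈ Col ↔ t.down ∉ Col)) ∧
    (∀ c ∈ Col, ∀ c' : C, ∀ t ∈ T, ∀ t' ∈ T,
       t.left = c → t.up = c' → t'.left = c → t'.up = c' → t = t') ∧
    (∀ c ∉ Col, ∀ c' : C, ∀ t ∈ T, ∀ t' ∈ T,
       t.right = c → t.up = c' → t'.right = c → t'.up = c' → t = t')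

lemma shrink_one {C : Type} [DecidableEq C] (white : C) (T : Finset (Tile C))
    (h : ℕ) (hh : T.card + 1 < h) (τ : Fin h → Tile C)
    (ht : IsColTiling white T h τ) :
    ∃ h' : ℕ, 1 ≤ h' ∧ h' < h ∧ ∃ τ' : Fin h' → Tile C,
      IsColTiling white T h' τ' := by
  obtain ⟨hmem, htop, hbot, hl, hr, hmatch⟩ := ht
  -- pigeonhole
  have hcard : Fintype.card {t // t ∈ T} < Fintype.card (Fin h) := by
    simp [Fintype.card_coe]; omega
  obtain ⟨a, b, hab, heq⟩ := Fintype.exists_ne_map_eq_of_card_lt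
    (fun i : Fin h => (⟨τ i, hmem i⟩ : {t // t ∈ T})) hcard
  have heq' : τ a = τ b := congrArg Subtype.val heq
  clear heq
  have hne : a.val ≠ b.val := fun e => hab (Fin.ext e)
  clear hab
  -- wlog a < b
  wlog hlt : a.val < b.val generalizing a b
  · exact this b a heq'.symm (by omega) (by omega)
  set d := b.val - a.val with hd
  have hd1 : 1 ≤ d := by omega
  have hbh : b.val < h := b.isLt
  refine ⟨h - d, by omega, by omega, ?_⟩
  have hidx : ∀ k : Fin (h - d), a.val < k.val → k.val + d < h := by
    intro k hk; have := k.isLt; omega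
  have tcong : ∀ (m n : ℕ) (pm : m < h) (pn : n < h), m = n →
      τ ⟨m, pm⟩ = τ ⟨n, pn⟩ := by intro m n pm pn e; subst e; rfl
  have tcong2 : ∀ (m : ℕ) (pm : m < h) (i : Fin h), m = i.val →
      τ ⟨m, pm⟩ = τ i := by intro m pm i e; cases i; subst e; rfl
  refine ⟨fun k => if hka : k.val ≤ a.val then τ ⟨k.val, by omega⟩
    else τ ⟨k.val + d, hidx k (by omega)⟩, ?_, ?_, ?_, ?_, ?_, ?_⟩
  · intro k; dsimp only; split <;> apply hmem
  · intro k hk; dsimp only; rw [dif_pos (by omega)]; exact htop _ hk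
  · intro k hk
    dsimp only; split
    · rename_i hka
      rw [tcong2 k.val _ a (by omega), heq']
      exact hbot b (by omega)
    · exact hbot _ (by show k.val + d = h - 1; omega)
  · intro k; dsimp only; split <;> apply hl
  · intro k; dsimp only; split <;> apply hr
  · intro k hk
    dsimp only
    rcases lt_trichotomy k.val a.val with h1 | h1 | h1
    · rw [dif_pos (by omega), dif_pos (by omega)]
      exact hmatch ⟨k.val, by omega⟩ (by show k.val + 1 < h; omega)
    · rw [dif_pos (by omega), dif_neg (by omega),
          tcong2 k.val _ a h1, heq',
          tcong (k.val + 1 + d) (b.val + 1) _ (by omega) (by omega)]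
      exact hmatch b (by show b.val + 1 < h; omega)
    · rw [dif_neg (by omega), dif_neg (by omega),
          tcong (k.val + 1 + d) (k.val + d + 1) _ (by omega) (by omega)]
      exact hmatch ⟨k.val + d, by omega⟩ (by show k.val + d + 1 < h; omega)

lemma small_model {C : Type} [DecidableEq C] (white : C) (T : Finset (Tile C)) :
    ∀ h : ℕ, 1 ≤ h → (∃ τ : Fin h → Tile C, IsColTiling white T h τ) →
    ∃ h', 1 ≤ h' ∧ h' ≤ T.card + 1 ∧ ∃ τ' : Fin h' → Tile C,
      IsColTiling white T h' τ' := by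
  intro h
  induction h using Nat.strong_induction_on with
  | _ h ih =>
    rintro h1 ⟨τ, ht⟩
    by_cases hc : h ≤ T.card + 1
    · exact ⟨h, h1, hc, τ, ht⟩
    · obtain ⟨h', h'1, h'lt, τ', ht'⟩ := shrink_one white T h (by omega) τ ht
      exact ih h' h'lt h'1 ⟨τ', ht'⟩

instance colDec {C : Type} [DecidableEq C] (white : C) (T : Finset (Tile C))
    (h : ℕ) : Decidable (∃ τ : Fin h → Tile C, IsColTiling white T h τ) := by
  have key : (∃ σ : Fin h → {t // t ∈ T},
      IsColTiling white T h (fun i => (σ i).1)) ↔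
      (∃ τ : Fin h → Tile C, IsColTiling white T h τ) := by
    constructor
    · rintro ⟨σ, ht⟩; exact ⟨_, ht⟩
    · rintro ⟨τ, ht⟩; exact ⟨fun i => ⟨τ i, ht.1 i⟩, ht⟩
  haveI : DecidablePred fun σ : Fin h → {t // t ∈ T} =>
      IsColTiling white T h (fun i => (σ i).1) := by
    intro σ; unfold IsColTiling; infer_instance
  exact decidable_of_iff _ key

/-- A one-column tiling of some height h ≥ 1 exists iff one of height at most
|T| + 1 exists; consequently, existence is decidable. -/
theorem colTiling_small_model_and_decidable {C : Type} [DecidableEq C]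
    (white : C) (T : Finset (Tile C)) :
    ((∃ h : ℕ, 1 ≤ h ∧ ∃ τ : Fin h → Tile C, IsColTiling white T h τ) ↔
      (∃ h : ℕ, 1 ≤ h ∧ h ≤ T.card + 1 ∧ ∃ τ : Fin h → Tile C,
        IsColTiling white T h τ)) ∧
    Nonempty (Decidable
      (∃ h : ℕ, 1 ≤ h ∧ ∃ τ : Fin h → Tile C, IsColTiling white T h τ)) := by
  have hiff : (∃ h : ℕ, 1 ≤ h ∧ ∃ τ : Fin h → Tile C, IsColTiling white T h τ) ↔
      (∃ h ∈ Finset.Icc 1 (T.card + 1), ∃ τ : Fin h → Tile C,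
        IsColTiling white T h τ) := by
    constructor
    · rintro ⟨h, h1, hτ⟩
      obtain ⟨h', h'1, h'le, ht'⟩ := small_model white T h h1 hτ
      exact ⟨h', Finset.mem_Icc.mpr ⟨h'1, h'le⟩, ht'⟩
    · rintro ⟨h, hmem, hτ⟩
      exact ⟨h, (Finset.mem_Icc.mp hmem).1, hτ⟩
  constructor
  · constructor
    · rintro ⟨h, h1, hτ⟩
      obtain ⟨h', h'1, h'le, ht'⟩ := small_model white T h h1 hτ
      exact ⟨h', h'1, h'le, ht'⟩
    · rintro ⟨h, h1, _, hτ⟩; exact ⟨h, h1, hτ⟩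
  · exact ⟨decidable_of_iff _ hiff.symm⟩
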